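/- Let ε ∈ (0,1], k ∈ ℕ, K = 2^{⌈log₂(k+1)⌉}, W the Hadamard Response channel from [k] to [K] with parameter ε, and α_H = (e^ε−1)/(e^ε+1). For a probability distribution p on [k]×[k], define T(p) on [K]×[K] by T(p)(z₁,z₂) = Σ_{x₁,x₂∈[k]} W(z₁|x₁) W(z₂|x₂) p(x₁,x₂). Then for any two distributions p, q on [k]×[k] with respective marginals p₁, p₂ and q₁, q₂, one has ‖T(p) − T(q)‖₂² = (α_H⁴/K²)‖p − q‖₂² + (α_H²/K²)(‖p₁ − q₁‖₂² + ‖p₂ − q₂‖₂²). In particular, if TV(p,q) > γ then ‖T(p) − T(q)‖₂ > 2 α_H² γ/(K k). -/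

import Mathlib

open Finset

/-- Entry of the Sylvester Hadamard matrix of order `2^t`, at row `a`, column `b`
(indices in `{0, …, 2^t − 1}`): `(−1)^{⟨a,b⟩}` where `⟨a,b⟩` is the inner product
mod 2 of the binary representations of `a` and `b`. -/
def hadSign (t a b : ℕ) : ℤ :=
  if (∑ r ∈ Finset.range t, if a.testBit r ∧ b.testBit r then 1 else 0) % 2 = 0 then 1
  else -1

/-- Output alphabet size for Hadamard Response: `K = 2^{⌈log₂(k+1)⌉}`. -/
def hrK (k : ℕ) : ℕ := 2 ^ Nat.clog 2 (k + 1)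

noncomputable def alphaH (ε : ℝ) : ℝ := (Real.exp ε - 1) / (Real.exp ε + 1)

/-- The Hadamard Response channel `W(z|x)`: with the set `C_x ⊆ [K]` encoded by the
`φ(x)`-th row of the Hadamard matrix (`z ∈ C_x` iff the `(φ(x), z)` entry is `+1`),
`W(z|x) = (2/K)·e^ε/(e^ε+1)` for `z ∈ C_x` and `(2/K)·1/(e^ε+1)` otherwise. -/
noncomputable def hrW (ε : ℝ) {k : ℕ} (φ : Fin k → Fin (hrK k)) (x : Fin k)
    (z : Fin (hrK k)) : ℝ :=
  if hadSign (Nat.clog 2 (k + 1)) (φ x).val z.val = 1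
    then (2 / (hrK k : ℝ)) * (Real.exp ε / (Real.exp ε + 1))
    else (2 / (hrK k : ℝ)) * (1 / (Real.exp ε + 1))

/-- `T(p)`, the output distribution on `[K]×[K]` obtained by applying Hadamard
Response independently to both coordinates of a sample from `p ∈ Δ([k]×[k])`. -/
noncomputable def hrT (ε : ℝ) {k : ℕ} (φ : Fin k → Fin (hrK k))
    (p : Fin k → Fin k → ℝ) (z₁ z₂ : Fin (hrK k)) : ℝ :=
  ∑ x₁, ∑ x₂, hrW ε φ x₁ z₁ * hrW ε φ x₂ z₂ * p x₁ x₂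

/-! In the ±1 form of the Hadamard matrix, `W(z|x) = (1 + α_H H_{φ(x),z}) / K`. The rows of `H`
are orthogonal and every row but the `0`-th sums to zero, so the channel has Gram matrix
`∑_z W(z|x) W(z|y) = (1 + α_H² δ_{xy}) / K`. The squared `ℓ₂` norm of `T(d) = (W ⊗ W) d` is the
quadratic form of `d` under the Kronecker square of this Gram matrix; expanding it produces the
total mass of `d` (zero for `d = p − q`), its two marginals and `‖d‖₂²`. The total-variation bound
then follows from Cauchy–Schwarz, `‖d‖₁ ≤ k ‖d‖₂`. -/

section Bilinear

variable {X₁ X₂ Z₁ Z₂ : Type*} [Fintype X₁] [Fintype X₂] [Fintype Z₁] [Fintype Z₂]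

lemma sum_sq_sum_mul (A : X₁ → Z₁ → ℝ) (c : X₁ → ℝ) :
    ∑ z, (∑ x, A x z * c x) ^ 2 = ∑ x, ∑ y, (∑ z, A x z * A y z) * (c x * c y) := by
  simp only [sq, sum_mul_sum]
  simp only [sum_mul]
  rw [sum_comm]
  refine sum_congr rfl fun x _ => ?_
  rw [sum_comm]
  exact sum_congr rfl fun y _ => sum_congr rfl fun z _ => by ring

lemma sum_sq_sum_sum_mul_mul (A : X₁ → Z₁ → ℝ) (B : X₂ → Z₂ → ℝ) (d : X₁ → X₂ → ℝ) :
    ∑ z₁, ∑ z₂, (∑ x₁, ∑ x₂, A x₁ z₁ * B x₂ z₂ * d x₁ x₂) ^ 2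
      = ∑ x₁, ∑ x₂, ∑ y₁, ∑ y₂,
          (∑ z₁, A x₁ z₁ * A y₁ z₁) * (∑ z₂, B x₂ z₂ * B y₂ z₂) * (d x₁ x₂ * d y₁ y₂) := by
  have := sum_sq_sum_mul (fun (x : X₁ × X₂) (z : Z₁ × Z₂) => A x.1 z.1 * B x.2 z.2)
    (fun x => d x.1 x.2)
  simp only [Fintype.sum_prod_type] at this
  convert this using 6 with x₁ _ x₂ _ y₁ _ y₂ _
  rw [sum_mul_sum]
  exact sum_congr rfl fun _ _ => sum_congr rfl fun _ _ => by ring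

lemma sum_add_mul_ite_mul [DecidableEq X₁] (a b : ℝ) (x : X₁) (g : X₁ → ℝ) :
    ∑ y, (a + b * if x = y then 1 else 0) * g y = a * ∑ y, g y + b * g x := by
  simp [add_mul, sum_add_distrib, mul_sum]

lemma sum_affine_delta_mul_affine_delta_mul [DecidableEq X₁] [DecidableEq X₂] (a b : ℝ)
    (d : X₁ → X₂ → ℝ) :
    ∑ x₁, ∑ x₂, ∑ y₁, ∑ y₂,
        (a + b * if x₁ = y₁ then 1 else 0) * (a + b * if x₂ = y₂ then 1 else 0)
          * (d x₁ x₂ * d y₁ y₂)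
      = a ^ 2 * (∑ x₁, ∑ x₂, d x₁ x₂) ^ 2
        + a * b * (∑ x₁, (∑ x₂, d x₁ x₂) ^ 2 + ∑ x₂, (∑ x₁, d x₁ x₂) ^ 2)
        + b ^ 2 * ∑ x₁, ∑ x₂, d x₁ x₂ ^ 2 := by
  calc _ = ∑ x₁, ∑ x₂, d x₁ x₂ * ∑ y₁, (a + b * if x₁ = y₁ then 1 else 0)
          * ∑ y₂, (a + b * if x₂ = y₂ then 1 else 0) * d y₁ y₂ := by
        simp only [mul_sum]
        exact sum_congr rfl fun _ _ => sum_congr rfl fun _ _ =>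
          sum_congr rfl fun _ _ => sum_congr rfl fun _ _ => by ring
    _ = ∑ x₁, ∑ x₂, d x₁ x₂ * (a * (a * ∑ y₁, ∑ y₂, d y₁ y₂ + b * ∑ y₁, d y₁ x₂)
          + b * (a * ∑ y₂, d x₁ y₂ + b * d x₁ x₂)) := by
        simp only [sum_add_mul_ite_mul, mul_add, sum_add_distrib, ← mul_sum]
        ring
    _ = _ := by
        have hcol : ∑ x₁, ∑ x₂, d x₁ x₂ * (a * (b * ∑ y₁, d y₁ x₂))
            = ∑ x₂, (∑ x₁, d x₁ x₂) * (a * (b * ∑ y₁, d y₁ x₂)) := by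
          rw [sum_comm]; simp only [← sum_mul]
        have hab : ∀ u : ℝ, u * (a * (b * u)) = a * b * u ^ 2 := fun u => by ring
        have hba : ∀ u : ℝ, u * (b * (a * u)) = a * b * u ^ 2 := fun u => by ring
        have hbb : ∀ u : ℝ, u * (b * (b * u)) = b ^ 2 * u ^ 2 := fun u => by ring
        simp only [mul_add, sum_add_distrib, ← sum_mul, hcol, hab, hba, hbb, ← mul_sum]
        ring

end Bilinear

lemma sum_affine_mul_affine_of_orthogonal {X Z : Type*} [Fintype Z] [DecidableEq X]
    (s : X → Z → ℝ) (c : ℝ) (hsum : ∀ x, ∑ z, s x z = 0)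
    (horth : ∀ x y, ∑ z, s x z * s y z = if x = y then (Fintype.card Z : ℝ) else 0) (x y : X) :
    ∑ z, (1 + c * s x z) / Fintype.card Z * ((1 + c * s y z) / Fintype.card Z)
      = 1 / Fintype.card Z + c ^ 2 / Fintype.card Z * if x = y then 1 else 0 := by
  set N : ℝ := (Fintype.card Z : ℝ)
  have hexpand : ∀ z, (1 + c * s x z) / N * ((1 + c * s y z) / N)
      = (1 + c * s x z + c * s y z + c ^ 2 * (s x z * s y z)) / N ^ 2 := fun z => by ring
  simp only [hexpand, ← sum_div, sum_add_distrib, ← mul_sum, hsum, horth, sum_const, card_univ,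
    nsmul_eq_mul, mul_one]
  rcases eq_or_ne N 0 with hN | hN
  · simp [hN]
  · split_ifs <;> field_simp <;> ring

lemma sq_sum_sum_abs_le {X Y : Type*} [Fintype X] [Fintype Y] (d : X → Y → ℝ) :
    (∑ x, ∑ y, |d x y|) ^ 2 ≤ Fintype.card X * Fintype.card Y * ∑ x, ∑ y, d x y ^ 2 := by
  have := sq_sum_le_card_mul_sum_sq (s := univ) (f := fun w : X × Y => |d w.1 w.2|)
  simpa only [Fintype.sum_prod_type, card_univ, Fintype.card_prod, Nat.cast_mul, sq_abs]
    using this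

lemma hadSign_eq_prod (t a b : ℕ) :
    hadSign t a b = ∏ r ∈ range t, if a.testBit r ∧ b.testBit r then -1 else 1 := by
  have hterm : ∀ r, (if a.testBit r ∧ b.testBit r then (-1 : ℤ) else 1)
      = (-1) ^ (if a.testBit r ∧ b.testBit r then 1 else 0) := fun r => by split <;> simp
  rw [hadSign, prod_congr rfl fun r _ => hterm r, prod_pow_eq_pow_sum, neg_one_pow_eq_ite]
  simp only [Nat.even_iff]

lemma hadSign_comm (t a b : ℕ) : hadSign t a b = hadSign t b a := by
  simp only [hadSign, and_comm]

lemma hadSign_zero_left (t b : ℕ) : hadSign t 0 b = 1 := by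
  simp [hadSign]

lemma hadSign_xor_left (t a b z : ℕ) :
    hadSign t (a ^^^ b) z = hadSign t a z * hadSign t b z := by
  simp only [hadSign_eq_prod, ← prod_mul_distrib, Nat.testBit_xor]
  refine prod_congr rfl fun r _ => ?_
  cases a.testBit r <;> cases b.testBit r <;> cases z.testBit r <;> simp

lemma hadSign_two_pow_right {t a j : ℕ} (hj : j < t) (ha : a.testBit j) :
    hadSign t a (2 ^ j) = -1 := by
  have hterm : ∀ r, (if a.testBit r ∧ (2 ^ j).testBit r then (-1 : ℤ) else 1)
      = if j = r then -1 else 1 := fun r => by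
    by_cases h : j = r
    · subst h; simp [ha]
    · simp [h]
  simp [hadSign_eq_prod, hterm, prod_ite_eq, hj]

lemma sum_hadSign_eq_zero {t c : ℕ} (hc0 : c ≠ 0) (hc : c < 2 ^ t) :
    ∑ z ∈ range (2 ^ t), hadSign t c z = 0 := by
  obtain ⟨j, hj⟩ := Nat.exists_testBit_of_ne_zero hc0
  have hjt : j < t :=
    (Nat.pow_lt_pow_iff_right one_lt_two).1 ((Nat.ge_two_pow_of_testBit hj).trans_lt hc)
  have hflip : ∀ z, hadSign t c (z ^^^ 2 ^ j) = -hadSign t c z := fun z => by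
    rw [hadSign_comm, hadSign_xor_left, hadSign_comm t (2 ^ j), hadSign_two_pow_right hjt hj,
      hadSign_comm, mul_neg_one]
  refine sum_involution (fun z _ => z ^^^ 2 ^ j) (fun z _ => by rw [hflip]; ring)
    (fun z _ _ h => ?_) (fun z hz => ?_) (fun z _ => by simp)
  · simpa using congrArg (· ^^^ z) h
  · exact mem_range.2 (Nat.xor_lt_two_pow (mem_range.1 hz) (Nat.pow_lt_pow_right one_lt_two hjt))

lemma sum_hadSign_mul_hadSign {t a b : ℕ} (ha : a < 2 ^ t) (hb : b < 2 ^ t) :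
    ∑ z ∈ range (2 ^ t), hadSign t a z * hadSign t b z = if a = b then 2 ^ t else 0 := by
  simp only [← hadSign_xor_left]
  split_ifs with hab
  · simp [hab, hadSign_zero_left]
  · exact sum_hadSign_eq_zero (by simpa using hab) (Nat.xor_lt_two_pow ha hb)

lemma hadSign_eq_neg_one {t a b : ℕ} (h : hadSign t a b ≠ 1) : hadSign t a b = -1 := by
  rw [hadSign] at h ⊢
  split_ifs at h ⊢ <;> simp_all

lemma alphaH_pos {ε : ℝ} (hε : 0 < ε) : 0 < alphaH ε :=
  div_pos (by linarith [Real.add_one_lt_exp hε.ne']) (by positivity)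

section HadamardResponse

variable (ε : ℝ) {k : ℕ} (φ : Fin k → Fin (hrK k))

lemma hrW_eq (x : Fin k) (z : Fin (hrK k)) :
    hrW ε φ x z = (1 + alphaH ε * hadSign (Nat.clog 2 (k + 1)) (φ x) z) / hrK k := by
  have he : Real.exp ε + 1 ≠ 0 := by positivity
  unfold hrW alphaH
  split_ifs with h
  · rw [h]; field_simp; ring
  · rw [hadSign_eq_neg_one h]
    field_simp; ring

lemma sum_hrW_mul_hrW (hφ : Function.Injective φ) (hφ0 : ∀ x, (φ x : ℕ) ≠ 0) (x y : Fin k) :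
    ∑ z, hrW ε φ x z * hrW ε φ y z
      = 1 / hrK k + alphaH ε ^ 2 / hrK k * if x = y then 1 else 0 := by
  set t := Nat.clog 2 (k + 1)
  have hrange : ∀ f : ℕ → ℝ, ∑ z : Fin (hrK k), f z = ∑ z ∈ range (2 ^ t), f z :=
    fun f => Fin.sum_univ_eq_sum_range f _
  have hlt : ∀ x, (φ x : ℕ) < 2 ^ t := fun x => (φ x).isLt
  have hsum : ∀ x, ∑ z : Fin (hrK k), (hadSign t (φ x) z : ℝ) = 0 := fun x => by
    rw [hrange (fun z => (hadSign t (φ x) z : ℝ)), ← Int.cast_sum,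
      sum_hadSign_eq_zero (hφ0 x) (hlt x), Int.cast_zero]
  have horth : ∀ x y, ∑ z : Fin (hrK k), (hadSign t (φ x) z : ℝ) * hadSign t (φ y) z
      = if x = y then (Fintype.card (Fin (hrK k)) : ℝ) else 0 := fun x y => by
    rw [hrange (fun z => (hadSign t (φ x) z : ℝ) * hadSign t (φ y) z)]
    simp only [← Int.cast_mul, ← Int.cast_sum, sum_hadSign_mul_hadSign (hlt x) (hlt y),
      Fin.val_inj, hφ.eq_iff, Fintype.card_fin]
    split_ifs <;> simp [hrK, t]
  have := sum_affine_mul_affine_of_orthogonal _ (alphaH ε) hsum horth x y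
  simpa only [hrW_eq, Fintype.card_fin] using this

lemma hrT_sub (p q : Fin k → Fin k → ℝ) (z₁ z₂ : Fin (hrK k)) :
    hrT ε φ p z₁ z₂ - hrT ε φ q z₁ z₂ = hrT ε φ (p - q) z₁ z₂ := by
  simp only [hrT, ← sum_sub_distrib, Pi.sub_apply, mul_sub]

lemma sum_sq_hrT (hφ : Function.Injective φ) (hφ0 : ∀ x, (φ x : ℕ) ≠ 0)
    (d : Fin k → Fin k → ℝ) :
    ∑ z₁, ∑ z₂, hrT ε φ d z₁ z₂ ^ 2
      = (∑ x₁, ∑ x₂, d x₁ x₂) ^ 2 / hrK k ^ 2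
        + alphaH ε ^ 2 / hrK k ^ 2 * (∑ x₁, (∑ x₂, d x₁ x₂) ^ 2 + ∑ x₂, (∑ x₁, d x₁ x₂) ^ 2)
        + alphaH ε ^ 4 / hrK k ^ 2 * ∑ x₁, ∑ x₂, d x₁ x₂ ^ 2 := by
  simp only [hrT, sum_sq_sum_sum_mul_mul, sum_hrW_mul_hrW ε φ hφ hφ0,
    sum_affine_delta_mul_affine_delta_mul]
  ring

lemma sum_sq_hrT_sub (hφ : Function.Injective φ) (hφ0 : ∀ x, (φ x : ℕ) ≠ 0)
    {p q : Fin k → Fin k → ℝ} (hpq : ∑ x₁, ∑ x₂, p x₁ x₂ = ∑ x₁, ∑ x₂, q x₁ x₂) :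
    ∑ z₁, ∑ z₂, (hrT ε φ p z₁ z₂ - hrT ε φ q z₁ z₂) ^ 2
      = alphaH ε ^ 4 / hrK k ^ 2 * ∑ x₁, ∑ x₂, (p x₁ x₂ - q x₁ x₂) ^ 2
        + alphaH ε ^ 2 / hrK k ^ 2 *
            (∑ x₁, (∑ x₂, p x₁ x₂ - ∑ x₂, q x₁ x₂) ^ 2
              + ∑ x₂, (∑ x₁, p x₁ x₂ - ∑ x₁, q x₁ x₂) ^ 2) := by
  simp only [hrT_sub, sum_sq_hrT ε φ hφ hφ0, Pi.sub_apply, sum_sub_distrib, hpq, sub_self]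
  ring

end HadamardResponse

theorem hr_bivariate_parseval_general
    (ε : ℝ) (hε0 : 0 < ε) (k : ℕ)
    (φ : Fin k → Fin (hrK k)) (hφ : Function.Injective φ) (hφ0 : ∀ x, (φ x).val ≠ 0)
    (p q : Fin k → Fin k → ℝ)
    (hp1 : ∑ x₁, ∑ x₂, p x₁ x₂ = 1)
    (hq1 : ∑ x₁, ∑ x₂, q x₁ x₂ = 1)
    (γ : ℝ) (hγ : 0 < γ) :
    (∑ z₁, ∑ z₂, (hrT ε φ p z₁ z₂ - hrT ε φ q z₁ z₂) ^ 2
        = (alphaH ε) ^ 4 / (hrK k : ℝ) ^ 2 * (∑ x₁, ∑ x₂, (p x₁ x₂ - q x₁ x₂) ^ 2)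
          + (alphaH ε) ^ 2 / (hrK k : ℝ) ^ 2 *
              ((∑ x₁, ((∑ x₂, p x₁ x₂) - (∑ x₂, q x₁ x₂)) ^ 2)
                + (∑ x₂, ((∑ x₁, p x₁ x₂) - (∑ x₁, q x₁ x₂)) ^ 2)))
    ∧ ((1 / 2) * (∑ x₁, ∑ x₂, |p x₁ x₂ - q x₁ x₂|) > γ →
        Real.sqrt (∑ z₁, ∑ z₂, (hrT ε φ p z₁ z₂ - hrT ε φ q z₁ z₂) ^ 2)
          > 2 * (alphaH ε) ^ 2 * γ / ((hrK k : ℝ) * (k : ℝ))) := by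
  have parseval := sum_sq_hrT_sub ε φ hφ hφ0 (hp1.trans hq1.symm)
  refine ⟨parseval, fun hTV => Real.lt_sqrt_of_sq_lt ?_⟩
  have hk : (0 : ℝ) < k := by
    rcases k.eq_zero_or_pos with rfl | hk
    · simp at hTV; linarith
    · exact_mod_cast hk
  have hK : (0 : ℝ) < hrK k := by simp [hrK]
  have hl2 : (2 * γ) ^ 2 / k ^ 2 < ∑ x₁, ∑ x₂, (p x₁ x₂ - q x₁ x₂) ^ 2 := by
    have hcs := sq_sum_sum_abs_le (fun x₁ x₂ => p x₁ x₂ - q x₁ x₂)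
    rw [Fintype.card_fin] at hcs
    rw [div_lt_iff₀ (by positivity)]
    calc (2 * γ) ^ 2 < (∑ x₁, ∑ x₂, |p x₁ x₂ - q x₁ x₂|) ^ 2 := by gcongr; linarith
      _ ≤ _ := by linarith
  have hα := pow_pos (alphaH_pos hε0) 4
  calc (2 * alphaH ε ^ 2 * γ / (hrK k * k)) ^ 2
      = alphaH ε ^ 4 / hrK k ^ 2 * ((2 * γ) ^ 2 / k ^ 2) := by field_simp
    _ < alphaH ε ^ 4 / hrK k ^ 2 * ∑ x₁, ∑ x₂, (p x₁ x₂ - q x₁ x₂) ^ 2 := by gcongr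
    _ ≤ _ := by rw [parseval]; apply le_add_of_nonneg_right; positivity

/-- The bivariate Hadamard transform preserves `ℓ₂` distances:
`‖T(p) − T(q)‖₂² = (α_H⁴/K²)‖p − q‖₂² + (α_H²/K²)(‖p₁ − q₁‖₂² + ‖p₂ − q₂‖₂²)`,
and in particular `‖T(p) − T(q)‖₂ > 2α_H²γ/(Kk)` whenever `TV(p,q) > γ`. -/
theorem hr_bivariate_parseval
    (ε : ℝ) (hε0 : 0 < ε) (hε1 : ε ≤ 1) (k : ℕ)
    (φ : Fin k → Fin (hrK k)) (hφ : Function.Injective φ) (hφ0 : ∀ x, (φ x).val ≠ 0)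
    (p q : Fin k → Fin k → ℝ)
    (hp0 : ∀ x₁ x₂, 0 ≤ p x₁ x₂) (hp1 : ∑ x₁, ∑ x₂, p x₁ x₂ = 1)
    (hq0 : ∀ x₁ x₂, 0 ≤ q x₁ x₂) (hq1 : ∑ x₁, ∑ x₂, q x₁ x₂ = 1)
    (γ : ℝ) (hγ : 0 < γ) :
    (∑ z₁, ∑ z₂, (hrT ε φ p z₁ z₂ - hrT ε φ q z₁ z₂) ^ 2
        = (alphaH ε) ^ 4 / (hrK k : ℝ) ^ 2 * (∑ x₁, ∑ x₂, (p x₁ x₂ - q x₁ x₂) ^ 2)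
          + (alphaH ε) ^ 2 / (hrK k : ℝ) ^ 2 *
              ((∑ x₁, ((∑ x₂, p x₁ x₂) - (∑ x₂, q x₁ x₂)) ^ 2)
                + (∑ x₂, ((∑ x₁, p x₁ x₂) - (∑ x₁, q x₁ x₂)) ^ 2)))
    ∧ ((1 / 2) * (∑ x₁, ∑ x₂, |p x₁ x₂ - q x₁ x₂|) > γ →
        Real.sqrt (∑ z₁, ∑ z₂, (hrT ε φ p z₁ z₂ - hrT ε φ q z₁ z₂) ^ 2)
          > 2 * (alphaH ε) ^ 2 * γ / ((hrK k : ℝ) * (k : ℝ))) :=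
  hr_bivariate_parseval_general ε hε0 k φ hφ hφ0 p q hp1 hq1 γ hγ
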